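/- arXiv:1901.10517 — 8 statements merged into one kernel-verified Lean document; each statement's English description precedes it below -/
import Mathlib

section
/- For any temperature t ≥ 1, any n ≥ 2, any k ≤ n, and any positive keys r̂_1,…,r̂_n, the iterative softmax top-k relaxation is order-consistent: if r̂_i ≤ r̂_j then the relaxed k-hot outputs satisfy a_i ≤ a_j. -/
/-- Tempered softmax of logits `α : Fin n → ℝ` at temperature `t`. -/
noncomputable def softmaxT {n : ℕ} (t : ℝ) (α : Fin n → ℝ) (i : Fin n) : ℝ :=
  Real.exp (α i / t) / ∑ m, Real.exp (α m / t)

/-- Logits of the iterative softmax top-k relaxation: `alphaIter t r j` is `α^{j+1}`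
(the logits used at the `(j+1)`-th step, 0-indexed). -/
noncomputable def alphaIter {n : ℕ} (t : ℝ) (r : Fin n → ℝ) : ℕ → Fin n → ℝ
  | 0 => fun i => Real.log (r i)
  | j + 1 => fun i =>
      alphaIter t r j i + Real.log (1 - softmaxT t (alphaIter t r j) i)

/-- `pIter t r j i` is the softmax value `p_i^{j+1}` at the `(j+1)`-th step (0-indexed `j`). -/
noncomputable def pIter {n : ℕ} (t : ℝ) (r : Fin n → ℝ) (j : ℕ) (i : Fin n) : ℝ :=
  softmaxT t (alphaIter t r j) i

lemma key_ineq (t S u v : ℝ) (ht : 1 ≤ t) (hu : 0 < u) (huv : u ≤ v) (hS : u + v ≤ S) :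
    u ^ t * (S - u) ≤ v ^ t * (S - v) := by
  have hv : 0 < v := lt_of_lt_of_le hu huv
  have h1 : u * (S - u) ≤ v * (S - v) := by nlinarith
  have h2 : (0:ℝ) ≤ u * (S - u) := by nlinarith
  have h3 : u ^ (t - 1) ≤ v ^ (t - 1) :=
    Real.rpow_le_rpow hu.le huv (by linarith)
  have hu' : u ^ t = u ^ (t - 1) * u := by
    rw [show t = (t-1)+1 by ring, Real.rpow_add hu, Real.rpow_one]; ring_nf
  have hv' : v ^ t = v ^ (t - 1) * v := by
    rw [show t = (t-1)+1 by ring, Real.rpow_add hv, Real.rpow_one]; ring_nf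
  calc u ^ t * (S - u) = u ^ (t - 1) * (u * (S - u)) := by rw [hu']; ring
    _ ≤ v ^ (t - 1) * (v * (S - v)) := by
        apply mul_le_mul h3 h1 h2 (Real.rpow_nonneg hv.le _)
    _ = v ^ t * (S - v) := by rw [hv']; ring

lemma sum_exp_pos {n : ℕ} (hn : 2 ≤ n) (α : Fin n → ℝ) (t : ℝ) :
    0 < ∑ m, Real.exp (α m / t) := by
  have : Nonempty (Fin n) := ⟨⟨0, by omega⟩⟩
  exact Finset.sum_pos (fun m _ => Real.exp_pos _) Finset.univ_nonempty

lemma pair_le_sum {n : ℕ} (α : Fin n → ℝ) (t : ℝ) {i j : Fin n} (hij : i ≠ j) :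
    Real.exp (α i / t) + Real.exp (α j / t) ≤ ∑ m, Real.exp (α m / t) := by
  have := Finset.sum_le_sum_of_subset_of_nonneg
    (Finset.subset_univ ({i, j} : Finset (Fin n)))
    (fun m _ _ => (Real.exp_pos (α m / t)).le)
  rwa [Finset.sum_pair hij] at this

lemma alpha_mono {n : ℕ} (hn : 2 ≤ n) (t : ℝ) (ht : 1 ≤ t)
    (r : Fin n → ℝ) (hr : ∀ i, 0 < r i) (i j : Fin n) (hij : r i ≤ r j) :
    ∀ m, alphaIter t r m i ≤ alphaIter t r m j := by
  have ht0 : 0 < t := lt_of_lt_of_le one_pos ht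
  by_cases hij' : i = j
  · intro m; rw [hij']
  intro m
  induction m with
  | zero => exact Real.log_le_log (hr i) hij
  | succ m ih =>
    set α := alphaIter t r m with hα
    set S := ∑ m, Real.exp (α m / t) with hS
    have hSpos : 0 < S := sum_exp_pos hn α t
    set u := Real.exp (α i / t) with hu
    set v := Real.exp (α j / t) with hv
    have huv : u ≤ v := Real.exp_le_exp.mpr (div_le_div_of_nonneg_right ih ht0.le)
    have hpair : u + v ≤ S := pair_le_sum α t hij'
    have hupos : 0 < u := Real.exp_pos _
    have hvpos : 0 < v := Real.exp_pos _
    have hSu : 0 < S - u := by linarith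
    have hSv : 0 < S - v := by linarith
    have hpi : softmaxT t α i = u / S := rfl
    have hpj : softmaxT t α j = v / S := rfl
    have h1i : 1 - u / S = (S - u) / S := by field_simp
    have h1j : 1 - v / S = (S - v) / S := by field_simp
    show α i + Real.log (1 - softmaxT t α i) ≤ α j + Real.log (1 - softmaxT t α j)
    rw [hpi, hpj, h1i, h1j]
    rw [← Real.exp_le_exp, Real.exp_add, Real.exp_add,
      Real.exp_log (div_pos hSu hSpos), Real.exp_log (div_pos hSv hSpos)]
    have heui : Real.exp (α i) = u ^ t := by
      rw [hu, ← Real.exp_mul]; congr 1; field_simp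
    have heuj : Real.exp (α j) = v ^ t := by
      rw [hv, ← Real.exp_mul]; congr 1; field_simp
    rw [heui, heuj, div_eq_mul_inv, div_eq_mul_inv, ← mul_assoc, ← mul_assoc]
    apply mul_le_mul_of_nonneg_right _ (inv_nonneg.mpr hSpos.le)
    exact key_ineq t S u v ht hupos huv hpair

/-- Order-consistency of the iterative softmax top-k relaxation for `t ≥ 1`:
if `r̂ᵢ ≤ r̂ⱼ` then the relaxed `k`-hot outputs satisfy `aᵢ ≤ aⱼ`. -/
theorem relaxedTopK_consistent {n : ℕ} (hn : 2 ≤ n) (t : ℝ) (ht : 1 ≤ t)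
    (k : ℕ) (hk : k ≤ n) (r : Fin n → ℝ) (hr : ∀ i, 0 < r i)
    (i j : Fin n) (hij : r i ≤ r j) :
    ∑ m ∈ Finset.range k, pIter t r m i ≤ ∑ m ∈ Finset.range k, pIter t r m j := by
  have ht0 : 0 < t := lt_of_lt_of_le one_pos ht
  apply Finset.sum_le_sum
  intro m _
  have hα := alpha_mono hn t ht r hr i j hij m
  unfold pIter softmaxT
  have : Real.exp (alphaIter t r m i / t) ≤ Real.exp (alphaIter t r m j / t) :=
    Real.exp_le_exp.mpr (div_le_div_of_nonneg_right hα ht0.le)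
  gcongr
end

section
/- For any temperature t ≥ 1, any n ≥ 2, any k ≤ n, and any positive keys r̂_1,…,r̂_n with r̂_i ≤ r̂_j, the iterative softmax top-k relaxation satisfies, for every step m with 1 ≤ m ≤ k, both α_i^m ≤ α_j^m and p_i^m ≤ p_j^m. -/
lemma sumExp_pos {n : ℕ} (hn : 2 ≤ n) (t : ℝ) (α : Fin n → ℝ) :
    0 < ∑ m, Real.exp (α m / t) := by
  haveI : NeZero n := ⟨by omega⟩
  exact Finset.sum_pos (fun m _ => Real.exp_pos _) ⟨0, Finset.mem_univ _⟩

/-- key monotonicity step for the softmax -/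
lemma softmaxT_mono {n : ℕ} (hn : 2 ≤ n) {t : ℝ} (ht : 0 < t) {α : Fin n → ℝ}
    {i j : Fin n} (h : α i ≤ α j) : softmaxT t α i ≤ softmaxT t α j := by
  unfold softmaxT
  have hS := sumExp_pos hn t α
  exact div_le_div_of_nonneg_right
    (Real.exp_le_exp.2 (div_le_div_of_nonneg_right h ht.le)) hS.le
      |>.trans_eq rfl

lemma two_le_sum {n : ℕ} (hn : 2 ≤ n) (t : ℝ) (α : Fin n → ℝ) {i j : Fin n} (hij : i ≠ j) :
    Real.exp (α i / t) + Real.exp (α j / t) ≤ ∑ m, Real.exp (α m / t) := by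
  classical
  have hsub : ({i, j} : Finset (Fin n)) ⊆ Finset.univ := Finset.subset_univ _
  have := Finset.sum_le_sum_of_subset_of_nonneg hsub
    (fun m _ _ => (Real.exp_pos (α m / t)).le)
  rwa [Finset.sum_pair hij] at this

/-- one step of the iteration preserves the order of logits -/
lemma alpha_step_mono {n : ℕ} (hn : 2 ≤ n) {t : ℝ} (ht : 1 ≤ t) {α : Fin n → ℝ}
    {i j : Fin n} (h : α i ≤ α j) :
    α i + Real.log (1 - softmaxT t α i) ≤ α j + Real.log (1 - softmaxT t α j) := by
  rcases eq_or_ne i j with rfl | hij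
  · exact le_refl _
  have ht0 : (0:ℝ) < t := lt_of_lt_of_le one_pos ht
  set S := ∑ m, Real.exp (α m / t) with hSdef
  have hS : 0 < S := sumExp_pos hn t α
  set a := Real.exp (α i / t) with ha
  set b := Real.exp (α j / t) with hb
  have ha0 : 0 < a := Real.exp_pos _
  have hb0 : 0 < b := Real.exp_pos _
  have hab : a ≤ b := Real.exp_le_exp.2 (div_le_div_of_nonneg_right h ht0.le)
  have habS : a + b ≤ S := two_le_sum hn t α hij
  have hSa : 0 < S - a := by nlinarith
  have hSb : 0 < S - b := by nlinarith
  have hpi : softmaxT t α i = a / S := rfl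
  have hpj : softmaxT t α j = b / S := rfl
  have h1i : 1 - a / S = (S - a) / S := by field_simp
  have h1j : 1 - b / S = (S - b) / S := by field_simp
  rw [hpi, hpj, h1i, h1j, Real.log_div hSa.ne' hS.ne', Real.log_div hSb.ne' hS.ne']
  -- goal: α i + (log (S-a) - log S) ≤ α j + (log (S-b) - log S)
  have key : a * (S - a) ≤ b * (S - b) := by nlinarith
  have hlogkey : Real.log a + Real.log (S - a) ≤ Real.log b + Real.log (S - b) := by
    have := Real.log_le_log (by positivity) key
    rwa [Real.log_mul ha0.ne' hSa.ne', Real.log_mul hb0.ne' hSb.ne'] at this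
  have hla : Real.log a = α i / t := by rw [ha, Real.log_exp]
  have hlb : Real.log b = α j / t := by rw [hb, Real.log_exp]
  have hdiff : Real.log b - Real.log a ≤ α j - α i := by
    rw [hla, hlb]
    have hx : 0 ≤ α j / t - α i / t := by
      have := div_le_div_of_nonneg_right h ht0.le; linarith
    have : α j / t - α i / t ≤ t * (α j / t - α i / t) :=
      le_mul_of_one_le_left hx ht
    have ht' : t * (α j / t - α i / t) = α j - α i := by field_simp
    linarith
  linarith

lemma alphaIter_mono {n : ℕ} (hn : 2 ≤ n) {t : ℝ} (ht : 1 ≤ t) (r : Fin n → ℝ)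
    (hr : ∀ i, 0 < r i) {i j : Fin n} (hij : r i ≤ r j) (d : ℕ) :
    alphaIter t r d i ≤ alphaIter t r d j := by
  induction d with
  | zero => exact Real.log_le_log (hr i) hij
  | succ d ih => exact alpha_step_mono hn ht ih

/-- For `t ≥ 1` and `r̂ᵢ ≤ r̂ⱼ`, at every step `1 ≤ m ≤ k` of the iterative softmax top-k
relaxation both `α_i^m ≤ α_j^m` and `p_i^m ≤ p_j^m` (here the paper's 1-indexed step `m`
corresponds to index `m - 1` of `alphaIter`/`pIter`). -/
theorem relaxedTopK_stepwise_consistent {n : ℕ} (hn : 2 ≤ n) (t : ℝ) (ht : 1 ≤ t)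
    (k : ℕ) (hk : k ≤ n) (r : Fin n → ℝ) (hr : ∀ i, 0 < r i)
    (i j : Fin n) (hij : r i ≤ r j) (m : ℕ) (hm1 : 1 ≤ m) (hmk : m ≤ k) :
    alphaIter t r (m - 1) i ≤ alphaIter t r (m - 1) j ∧
      pIter t r (m - 1) i ≤ pIter t r (m - 1) j := by
  have hα := alphaIter_mono hn ht r hr hij (m - 1)
  exact ⟨hα, softmaxT_mono hn (lt_of_lt_of_le one_pos ht) hα⟩
end

section
/- Let n ≥ 2, t ≥ 1, and α_1,…,α_n ∈ ℝ, and for each index m let s_m = exp(α_m/t)/Σ_{l=1}^n exp(α_l/t) denote the tempered softmax (so 0 < s_m < 1). If α_i ≤ α_j, then α_i + log(1 − s_i) ≤ α_j + log(1 − s_j). In other words, a single update step of the iterative softmax top-k relaxation preserves the ordering of the logits when t ≥ 1. -/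
open Real Finset

lemma exp_mul_sub_exp_div_le {a b t S : ℝ} (hab : a ≤ b) (ht : 1 ≤ t)
    (hS : exp (a / t) + exp (b / t) ≤ S) :
    exp a * (S - exp (a / t)) ≤ exp b * (S - exp (b / t)) := by
  have ht0 : 0 < t := one_pos.trans_le ht
  have hR : exp a * (S - exp (a / t) - exp (b / t)) ≤ exp b * (S - exp (a / t) - exp (b / t)) :=
    mul_le_mul_of_nonneg_right (exp_le_exp.2 hab) (by linarith)
  have hcross : exp a * exp (b / t) ≤ exp b * exp (a / t) := by
    rw [← exp_add, ← exp_add, exp_le_exp]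
    have : a - b ≤ (a - b) / t := by
      rw [le_div_iff₀ ht0]
      nlinarith
    rw [sub_div] at this
    linarith
  linarith

lemma add_log_sub_exp_div_le {a b t S : ℝ} (hab : a ≤ b) (ht : 1 ≤ t)
    (hS : exp (a / t) + exp (b / t) ≤ S) :
    a + log ((S - exp (a / t)) / S) ≤ b + log ((S - exp (b / t)) / S) := by
  have ha : 0 < S - exp (a / t) := by linarith [exp_pos (b / t)]
  have hb : 0 < S - exp (b / t) := by linarith [exp_pos (a / t)]
  have hS0 : 0 < S := by linarith [exp_pos (a / t)]
  calc a + log ((S - exp (a / t)) / S) = log (exp a * (S - exp (a / t)) / S) := by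
        rw [mul_div_assoc, log_mul (exp_ne_zero _) (div_pos ha hS0).ne', log_exp]
    _ ≤ log (exp b * (S - exp (b / t)) / S) :=
        log_le_log (by positivity)
          (div_le_div_of_nonneg_right (exp_mul_sub_exp_div_le hab ht hS) hS0.le)
    _ = b + log ((S - exp (b / t)) / S) := by
        rw [mul_div_assoc, log_mul (exp_ne_zero _) (div_pos hb hS0).ne', log_exp]

lemma one_sub_softmaxT {n : ℕ} (t : ℝ) (α : Fin n → ℝ) (m : Fin n) :
    1 - softmaxT t α m = (∑ l, exp (α l / t) - exp (α m / t)) / ∑ l, exp (α l / t) := by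
  have hS : 0 < ∑ l, exp (α l / t) := sum_pos (fun l _ ↦ exp_pos _) ⟨m, mem_univ m⟩
  rw [softmaxT, sub_div, div_self hS.ne']

theorem step_preserves_order_general {n : ℕ} (t : ℝ) (ht : 1 ≤ t)
    (α : Fin n → ℝ) (i j : Fin n) (h : α i ≤ α j) :
    α i + Real.log (1 - softmaxT t α i) ≤ α j + Real.log (1 - softmaxT t α j) := by
  rcases eq_or_ne i j with rfl | hij
  · rfl
  have hpair : exp (α i / t) + exp (α j / t) ≤ ∑ l, exp (α l / t) := by
    rw [← sum_pair (f := fun l ↦ exp (α l / t)) hij]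
    exact sum_le_sum_of_subset_of_nonneg (subset_univ _) fun l _ _ ↦ (exp_pos _).le
  rw [one_sub_softmaxT, one_sub_softmaxT]
  exact add_log_sub_exp_div_le h ht hpair

/-- A single update step of the iterative softmax top-k relaxation preserves the
ordering of the logits when `t ≥ 1`: if `αᵢ ≤ αⱼ` then
`αᵢ + log(1 − sᵢ) ≤ αⱼ + log(1 − sⱼ)`, where `s` is the tempered softmax of `α`. -/
theorem step_preserves_order {n : ℕ} (hn : 2 ≤ n) (t : ℝ) (ht : 1 ≤ t)
    (α : Fin n → ℝ) (i j : Fin n) (h : α i ≤ α j) :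
    α i + Real.log (1 - softmaxT t α i) ≤ α j + Real.log (1 - softmaxT t α j) :=
  step_preserves_order_general t ht α i j h
end

section
/- The order-consistency of the iterative softmax top-k relaxation can fail for temperatures below 1: with n = 2, keys r̂_1 = e and r̂_2 = e², k = 2, and temperature t = 2/5, the relaxed k-hot outputs satisfy a_1 > a_2 even though r̂_1 < r̂_2. -/
/-!
With two logits the update `α_i ↦ α_i + log (1 - p_i)` adds `log p₁ - log p₀ = (α₁ - α₀) / t`
to the gap `α₀ - α₁`, i.e. it multiplies the gap by `1 - 1/t`, which is negative for `t < 1`.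
For the keys `e, e²` and `t = 2/5` the gap goes `-1 ↦ 3/2`, so `p₀¹ = σ(-5/2)`, `p₀² = σ(15/4)`,
and `a₀ = σ(-5/2) + σ(15/4) > 1 > 2 - a₀ = a₁` because `15/4 > 5/2`.
-/

open Real

lemma softmaxT_pos {n : ℕ} (t : ℝ) (α : Fin n → ℝ) (i : Fin n) : 0 < softmaxT t α i :=
  div_pos (exp_pos _) (Finset.sum_pos (fun _ _ ↦ exp_pos _) ⟨i, Finset.mem_univ i⟩)

lemma softmaxT_div_softmaxT {n : ℕ} (t : ℝ) (α : Fin n → ℝ) (i m : Fin n) :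
    softmaxT t α i / softmaxT t α m = exp ((α i - α m) / t) := by
  have hZ : 0 < ∑ k, exp (α k / t) := Finset.sum_pos (fun _ _ ↦ exp_pos _) ⟨i, Finset.mem_univ i⟩
  rw [softmaxT, softmaxT, div_div_div_cancel_right₀ hZ.ne', ← exp_sub, sub_div]

lemma softmaxT_fin_two_zero (t : ℝ) (α : Fin 2 → ℝ) :
    softmaxT t α 0 = sigmoid ((α 0 - α 1) / t) := by
  have h : exp (-((α 0 - α 1) / t)) = exp (α 1 / t) / exp (α 0 / t) := by
    rw [← exp_sub]; ring_nf
  rw [softmaxT, Fin.sum_univ_two, sigmoid_def, h]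
  field_simp

lemma softmaxT_fin_two_one (t : ℝ) (α : Fin 2 → ℝ) :
    softmaxT t α 1 = 1 - softmaxT t α 0 := by
  rw [softmaxT, softmaxT, Fin.sum_univ_two]
  field_simp
  ring

lemma softmaxT_fin_two_update_gap (t : ℝ) (α : Fin 2 → ℝ) :
    (α 0 + log (1 - softmaxT t α 0)) - (α 1 + log (1 - softmaxT t α 1)) =
      (1 - 1 / t) * (α 0 - α 1) := by
  have h1 : 1 - softmaxT t α 1 = softmaxT t α 0 := by rw [softmaxT_fin_two_one]; ring
  calc (α 0 + log (1 - softmaxT t α 0)) - (α 1 + log (1 - softmaxT t α 1))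
      = α 0 - α 1 + log (softmaxT t α 1 / softmaxT t α 0) := by
        rw [← softmaxT_fin_two_one, h1,
          log_div (softmaxT_pos t α 1).ne' (softmaxT_pos t α 0).ne']
        ring
    _ = (1 - 1 / t) * (α 0 - α 1) := by
        rw [softmaxT_div_softmaxT, log_exp]
        ring

lemma alphaIter_fin_two_gap (t : ℝ) (r : Fin 2 → ℝ) (j : ℕ) :
    alphaIter t r j 0 - alphaIter t r j 1 = (1 - 1 / t) ^ j * (log (r 0) - log (r 1)) := by
  induction j with
  | zero => simp [alphaIter]
  | succ j ih =>
    rw [pow_succ', mul_assoc, ← ih]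
    exact softmaxT_fin_two_update_gap t _

lemma pIter_fin_two_zero (t : ℝ) (r : Fin 2 → ℝ) (j : ℕ) :
    pIter t r j 0 = sigmoid ((1 - 1 / t) ^ j * (log (r 0) - log (r 1)) / t) := by
  rw [pIter, softmaxT_fin_two_zero, alphaIter_fin_two_gap]

lemma pIter_fin_two_one (t : ℝ) (r : Fin 2 → ℝ) (j : ℕ) :
    pIter t r j 1 = 1 - pIter t r j 0 :=
  softmaxT_fin_two_one t _

/-- Order-consistency can fail for `t < 1`: with keys `r̂ = [e, e²]`, `k = 2` and `t = 2/5`,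
the relaxed `k`-hot outputs satisfy `a₁ > a₂` even though `r̂₁ < r̂₂`. -/
theorem relaxedTopK_inconsistent_low_temperature :
    (![Real.exp 1, Real.exp 2] : Fin 2 → ℝ) 0 < (![Real.exp 1, Real.exp 2] : Fin 2 → ℝ) 1 ∧
      ∑ j ∈ Finset.range 2, pIter (2 / 5) ![Real.exp 1, Real.exp 2] j 1 <
        ∑ j ∈ Finset.range 2, pIter (2 / 5) ![Real.exp 1, Real.exp 2] j 0 := by
  refine ⟨exp_lt_exp.2 one_lt_two, ?_⟩
  have hp0 : pIter (2 / 5) ![exp 1, exp 2] 0 0 = 1 - sigmoid (5 / 2) := by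
    rw [pIter_fin_two_zero, ← sigmoid_neg]
    norm_num
  have hp1 : pIter (2 / 5) ![exp 1, exp 2] 1 0 = sigmoid (15 / 4) := by
    rw [pIter_fin_two_zero]
    norm_num
  have hσ : sigmoid (5 / 2) < sigmoid (15 / 4) := sigmoid_lt (by norm_num)
  simp only [Finset.sum_range_succ, Finset.sum_range_zero, pIter_fin_two_one, hp0, hp1]
  linarith
end

section
/- Let n ≥ 2 and let r̂_1,…,r̂_n be positive keys with pairwise distinct values, and let k ≤ n. As the temperature t tends to 0 from above, the relaxed k-hot output a_i(t) = Σ_{j=1}^k p_i^j(t) of the iterative softmax top-k relaxation converges to 1 if r̂_i is among the k largest of the keys and converges to 0 otherwise; that is, the relaxed output converges to the exact k-hot indicator vector of the top-k keys. -/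
/-!
Work with the logits `α^j` rather than with the probabilities. By induction on `j < n`, as
`t → 0⁺` the logit of every key of rank at least `j` (rank = number of strictly larger keys)
converges to `log r̂ᵢ`, while the logits of the `j` largest keys tend to `-∞`. At stage `j` the key
`μ` of rank `j` therefore dominates: for every other key `α_i^j - α_μ^j` has a negative limit or
tends to `-∞`, so `(α_i^j - α_μ^j) / t → -∞` and the softmax `p^j` concentrates on `μ`. Then
`log (1 - p_μ^j) → -∞` removes `μ`, while `log (1 - p_i^j) → 0` for the keys below it. Summing the
limits `p_i^j → [rank i = j]` over `j < k` gives the indicator of `rank i < k`.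
-/

open Filter

open Topology Finset

namespace RelaxedTopK

variable {n : ℕ}

lemma softmaxT_nonneg (t : ℝ) (α : Fin n → ℝ) (i : Fin n) : 0 ≤ softmaxT t α i := by
  unfold softmaxT
  positivity

lemma softmaxT_lt_one (hn : 1 < n) (t : ℝ) (α : Fin n → ℝ) (i : Fin n) :
    softmaxT t α i < 1 := by
  obtain ⟨m, hmi⟩ := Fintype.exists_ne_of_one_lt_card (by simpa using hn) i
  rw [softmaxT, div_lt_one (sum_pos (fun _ _ => Real.exp_pos _) ⟨i, mem_univ i⟩)]
  exact single_lt_sum (f := fun m => Real.exp (α m / t)) hmi (mem_univ i) (mem_univ m)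
    (Real.exp_pos _) fun _ _ _ => (Real.exp_pos _).le

lemma softmaxT_eq_exp_sub_div (t : ℝ) (α : Fin n → ℝ) (μ i : Fin n) :
    softmaxT t α i = Real.exp ((α i - α μ) / t) / ∑ m, Real.exp ((α m - α μ) / t) := by
  simp only [softmaxT, sub_div, Real.exp_sub, ← sum_div]
  rw [div_div_div_cancel_right₀ (Real.exp_pos _).ne']

lemma tendsto_softmaxT_of_tendsto_sub_div_atBot {l : Filter ℝ} {α : ℝ → Fin n → ℝ} {μ : Fin n}
    (h : ∀ i ≠ μ, Tendsto (fun t => (α t i - α t μ) / t) l atBot) (i : Fin n) :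
    Tendsto (fun t => softmaxT t (α t) i) l (𝓝 (if i = μ then 1 else 0)) := by
  have hexp : ∀ m, Tendsto (fun t => Real.exp ((α t m - α t μ) / t)) l
      (𝓝 (if m = μ then 1 else 0)) := by
    intro m
    by_cases hm : m = μ
    · simpa [hm] using tendsto_const_nhds
    · simpa [hm] using h m hm
  have hsum : Tendsto (fun t => ∑ m, Real.exp ((α t m - α t μ) / t)) l (𝓝 1) := by
    simpa using tendsto_finsetSum univ fun m _ => hexp m
  have hquot := (hexp i).div hsum one_ne_zero
  rw [div_one] at hquot
  simp only [softmaxT_eq_exp_sub_div _ _ μ]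
  exact hquot

noncomputable def rank (r : Fin n → ℝ) (i : Fin n) : ℕ :=
  #{m | r i < r m}

variable {r : Fin n → ℝ}

lemma rank_lt (r : Fin n → ℝ) (i : Fin n) : rank r i < n := by
  simpa [rank] using card_lt_card (filter_ssubset.2 ⟨i, mem_univ i, lt_irrefl (r i)⟩)

lemma rank_lt_rank {i m : Fin n} (h : r i < r m) : rank r m < rank r i := by
  refine card_lt_card ⟨fun x hx => ?_, fun hsub => ?_⟩
  · simp only [mem_filter, mem_univ, true_and] at hx ⊢
    exact h.trans hx
  · exact lt_irrefl (r m) (mem_filter.1 (hsub (mem_filter.2 ⟨mem_univ m, h⟩))).2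

lemma rank_injective (hinj : Function.Injective r) : Function.Injective (rank r) := by
  intro i m h
  by_contra hne
  rcases (hinj.ne hne).lt_or_gt with hlt | hlt
  · exact (rank_lt_rank hlt).ne' h
  · exact (rank_lt_rank hlt).ne h

lemma lt_of_rank_lt_rank (hinj : Function.Injective r) {i m : Fin n}
    (h : rank r m < rank r i) : r i < r m := by
  have hne : i ≠ m := by
    rintro rfl
    exact lt_irrefl _ h
  rcases (hinj.ne hne).lt_or_gt with hlt | hlt
  · exact hlt
  · exact absurd h (rank_lt_rank hlt).asymm

lemma exists_rank_eq (hinj : Function.Injective r) {j : ℕ} (hj : j < n) :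
    ∃ μ, rank r μ = j := by
  have hsurj : Function.Surjective fun i => (⟨rank r i, rank_lt r i⟩ : Fin n) :=
    Finite.injective_iff_surjective.1 fun a b hab =>
      rank_injective hinj (congrArg Fin.val hab)
  obtain ⟨μ, hμ⟩ := hsurj ⟨j, hj⟩
  exact ⟨μ, congrArg Fin.val hμ⟩

lemma alphaIter_succ (t : ℝ) (r : Fin n → ℝ) (j : ℕ) (i : Fin n) :
    alphaIter t r (j + 1) i = alphaIter t r j i + Real.log (1 - pIter t r j i) :=
  rfl

def LogitAsymptotics (r : Fin n → ℝ) (j : ℕ) : Prop :=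
  ∀ i, (j ≤ rank r i → Tendsto (fun t => alphaIter t r j i) (𝓝[>] 0) (𝓝 (Real.log (r i)))) ∧
    (rank r i < j → Tendsto (fun t => alphaIter t r j i) (𝓝[>] 0) atBot)

lemma tendsto_alphaIter_sub_div_atBot (hr : ∀ i, 0 < r i) (hinj : Function.Injective r)
    {j : ℕ} (hj : LogitAsymptotics r j) {μ : Fin n} (hμ : rank r μ = j) {i : Fin n}
    (hi : i ≠ μ) :
    Tendsto (fun t => (alphaIter t r j i - alphaIter t r j μ) / t) (𝓝[>] 0) atBot := by
  simp only [div_eq_mul_inv]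
  have hlimμ := (hj μ).1 hμ.ge
  rcases (rank_injective hinj |>.ne hi).lt_or_gt with hlt | hlt
  · simp only [sub_eq_add_neg]
    exact (((hj i).2 (hμ ▸ hlt)).atBot_add hlimμ.neg).atBot_mul_atTop₀ tendsto_inv_nhdsGT_zero
  · have hlog : Real.log (r i) - Real.log (r μ) < 0 :=
      sub_neg.2 (Real.log_lt_log (hr i) (lt_of_rank_lt_rank hinj hlt))
    exact Tendsto.neg_mul_atTop hlog (((hj i).1 (hμ ▸ hlt.le)).sub hlimμ)
      tendsto_inv_nhdsGT_zero

lemma tendsto_pIter_of_logitAsymptotics (hr : ∀ i, 0 < r i) (hinj : Function.Injective r)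
    {j : ℕ} (hj : LogitAsymptotics r j) {μ : Fin n} (hμ : rank r μ = j) (i : Fin n) :
    Tendsto (fun t => pIter t r j i) (𝓝[>] 0) (𝓝 (if i = μ then 1 else 0)) :=
  tendsto_softmaxT_of_tendsto_sub_div_atBot
    (fun _ => tendsto_alphaIter_sub_div_atBot hr hinj hj hμ) i

lemma logitAsymptotics_succ (hr : ∀ i, 0 < r i) (hinj : Function.Injective r) {j : ℕ}
    (hj : LogitAsymptotics r j) (hjn : j + 1 < n) : LogitAsymptotics r (j + 1) := by
  obtain ⟨μ, hμ⟩ := exists_rank_eq hinj (j.lt_succ_self.trans hjn)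
  have hp := tendsto_pIter_of_logitAsymptotics hr hinj hj hμ
  intro i
  simp only [alphaIter_succ]
  have hp_lt_one : ∀ t, pIter t r j i < 1 := fun t => softmaxT_lt_one (by omega) t _ i
  refine ⟨fun hi => ?_, fun hi => ?_⟩
  · have hp0 : Tendsto (fun t => pIter t r j i) (𝓝[>] 0) (𝓝 0) := by
      simpa [show i ≠ μ by rintro rfl; omega] using hp i
    have hlog0 : Tendsto (fun t => Real.log (1 - pIter t r j i)) (𝓝[>] 0) (𝓝 0) := by
      simpa using ((tendsto_const_nhds (x := (1 : ℝ))).sub hp0).log (by norm_num)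
    simpa using ((hj i).1 (by omega)).add hlog0
  rcases Nat.lt_succ_iff_lt_or_eq.1 hi with hlt | heq
  · refine tendsto_atBot_mono (fun t => add_le_of_nonpos_right ?_) ((hj i).2 hlt)
    exact Real.log_nonpos (sub_nonneg.2 (hp_lt_one t).le)
      (sub_le_self _ (softmaxT_nonneg t _ i))
  · obtain rfl : i = μ := rank_injective hinj (heq.trans hμ.symm)
    have hgap : Tendsto (fun t => 1 - pIter t r j i) (𝓝[>] 0) (𝓝[>] 0) :=
      tendsto_nhdsWithin_iff.2 ⟨by simpa using (tendsto_const_nhds (x := (1 : ℝ))).sub (hp i),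
        Eventually.of_forall fun t => sub_pos.2 (hp_lt_one t)⟩
    exact ((hj i).1 heq.ge).add_atBot (Real.tendsto_log_nhdsGT_zero.comp hgap)

lemma logitAsymptotics (hr : ∀ i, 0 < r i) (hinj : Function.Injective r) {j : ℕ}
    (hj : j < n) : LogitAsymptotics r j := by
  induction j with
  | zero => exact fun i => ⟨fun _ => tendsto_const_nhds, fun h => absurd h (Nat.not_lt_zero _)⟩
  | succ j ih => exact logitAsymptotics_succ hr hinj (ih (by omega)) hj

lemma tendsto_pIter (hr : ∀ i, 0 < r i) (hinj : Function.Injective r) {j : ℕ} (hj : j < n)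
    (i : Fin n) :
    Tendsto (fun t => pIter t r j i) (𝓝[>] 0) (𝓝 (if rank r i = j then 1 else 0)) := by
  obtain ⟨μ, rfl⟩ := exists_rank_eq hinj hj
  simpa only [(rank_injective hinj).eq_iff] using
    tendsto_pIter_of_logitAsymptotics hr hinj (logitAsymptotics hr hinj hj) rfl i

end RelaxedTopK

theorem relaxedTopK_tendsto_khot_general {n : ℕ} (r : Fin n → ℝ)
    (hr : ∀ i, 0 < r i) (hinj : Function.Injective r) (k : ℕ) (hk : k ≤ n) (i : Fin n) :
    Tendsto (fun t : ℝ => ∑ j ∈ Finset.range k, pIter t r j i) (nhdsWithin 0 (Set.Ioi 0))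
      (nhds (if (Finset.univ.filter fun m => r i < r m).card < k then 1 else 0)) := by
  have h := tendsto_finsetSum (range k) fun j hj =>
    RelaxedTopK.tendsto_pIter hr hinj ((mem_range.1 hj).trans_le hk) i
  simp only [sum_ite_eq, mem_range] at h
  exact h

/-- For distinct positive keys, as `t → 0⁺` the relaxed `k`-hot output
`aᵢ(t) = Σ_{j=1}^k p_i^j(t)` of the iterative softmax top-k relaxation converges to `1` if
`r̂ᵢ` is among the `k` largest keys (fewer than `k` keys exceed it) and to `0` otherwise. -/
theorem relaxedTopK_tendsto_khot {n : ℕ} (hn : 2 ≤ n) (r : Fin n → ℝ)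
    (hr : ∀ i, 0 < r i) (hinj : Function.Injective r) (k : ℕ) (hk : k ≤ n) (i : Fin n) :
    Tendsto (fun t : ℝ => ∑ j ∈ Finset.range k, pIter t r j i) (nhdsWithin 0 (Set.Ioi 0))
      (nhds (if (Finset.univ.filter fun m => r i < r m).card < k then 1 else 0)) :=
  relaxedTopK_tendsto_khot_general r hr hinj k hk i
end

section
/- Gumbel-max trick: let U_1,…,U_n be independent random variables on a probability space, each uniformly distributed on the interval (0,1), let w_1,…,w_n > 0 with Z = Σ_{i=1}^n w_i, and define the Gumbel-perturbed keys G_i = log w_i − log(−log U_i). Then for each index j, the probability that G_j is strictly larger than G_m for every m ≠ j equals w_j / Z. -/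
open MeasureTheory Set Real

/-! For `u, v ∈ (0,1)` the comparison of Gumbel keys `log a - log (-log u) < log b - log (-log v)`
is equivalent to `u < v ^ (a / b)`. Conditioning on `U_j = u`, the other `U_k` are independent and
lie below `u ^ (w_k / w_j)` with probability `u ^ (w_k / w_j)`, so the event has probability
`∫₀¹ u ^ ((Z - w_j) / w_j) du = w_j / Z`. -/

lemma log_sub_log_neg_log_lt_iff {a b u v : ℝ} (ha : 0 < a) (hb : 0 < b)
    (hu : u ∈ Ioo (0 : ℝ) 1) (hv : v ∈ Ioo (0 : ℝ) 1) :
    log a - log (-log u) < log b - log (-log v) ↔ u < v ^ (a / b) := by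
  have hlu : 0 < -log u := neg_pos.2 (log_neg hu.1 hu.2)
  have hlv : 0 < -log v := neg_pos.2 (log_neg hv.1 hv.2)
  calc log a - log (-log u) < log b - log (-log v)
      ↔ log (a * -log v) < log (b * -log u) := by
        rw [log_mul ha.ne' hlv.ne', log_mul hb.ne' hlu.ne']
        constructor <;> intro h <;> linarith
    _ ↔ a * -log v < b * -log u := log_lt_log_iff (by positivity) (by positivity)
    _ ↔ log u < log (v ^ (a / b)) := by
        rw [log_rpow hv.1, div_mul_eq_mul_div, lt_div_iff₀ hb]
        constructor <;> intro h <;> linarith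
    _ ↔ u < v ^ (a / b) := log_lt_log_iff hu.1 (rpow_pos_of_pos hv.1 _)

lemma volume_restrict_Ioo_zero_one_Iio {t : ℝ} (ht : t ≤ 1) :
    volume.restrict (Ioo (0 : ℝ) 1) (Iio t) = ENNReal.ofReal t := by
  rw [Measure.restrict_apply measurableSet_Iio, Iio_inter_Ioo, min_eq_left ht, volume_Ioo,
    sub_zero]

lemma lintegral_Ioo_zero_one_rpow {a : ℝ} (ha : -1 < a) :
    ∫⁻ u in Ioo (0 : ℝ) 1, ENNReal.ofReal (u ^ a) = ENNReal.ofReal (1 / (a + 1)) := by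
  have hint : IntegrableOn (fun u : ℝ => u ^ a) (Ioo 0 1) :=
    (intervalIntegral.intervalIntegrable_rpow' (a := 0) (b := 1) ha).1.mono_set
      Ioo_subset_Ioc_self
  have hnn : 0 ≤ᵐ[volume.restrict (Ioo (0 : ℝ) 1)] fun u : ℝ => u ^ a :=
    (ae_restrict_iff' measurableSet_Ioo).2 (.of_forall fun u hu => rpow_nonneg hu.1.le a)
  rw [← ofReal_integral_eq_lintegral_ofReal hint hnn, ← integral_Ioc_eq_integral_Ioo,
    ← intervalIntegral.integral_of_le zero_le_one, integral_rpow (.inl ha), one_rpow,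
    zero_rpow (by linarith), sub_zero]

lemma pi_volume_restrict_Ioo_setOf_lt_rpow {m : ℕ} (c : Fin (m + 1) → ℝ) (hc : ∀ k, 0 ≤ c k)
    (j : Fin (m + 1)) (hcj : c j = 1) :
    Measure.pi (fun _ => volume.restrict (Ioo (0 : ℝ) 1)) {x | ∀ k ≠ j, x k < x j ^ c k} =
      ENNReal.ofReal (1 / ∑ k, c k) := by
  set μ := volume.restrict (Ioo (0 : ℝ) 1)
  set T : Set (ℝ × (Fin m → ℝ)) := {p | ∀ k, p.2 k < p.1 ^ c (j.succAbove k)}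
  have hT : MeasurableSet T := by measurability
  have hpre : {x : Fin (m + 1) → ℝ | ∀ k ≠ j, x k < x j ^ c k} =
      MeasurableEquiv.piFinSuccAbove (fun _ => ℝ) j ⁻¹' T := by
    ext x
    simp [T, Fin.forall_iff_succAbove j, Fin.removeNth]
  have hslice : ∀ u ∈ Ioo (0 : ℝ) 1, Measure.pi (fun _ => μ) (Prod.mk u ⁻¹' T) =
      ENNReal.ofReal (u ^ ∑ k, c (j.succAbove k)) := by
    intro u hu
    have hpow : ∀ k, u ^ c (j.succAbove k) ≤ 1 := fun k => rpow_le_one hu.1.le hu.2.le (hc _)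
    rw [show Prod.mk u ⁻¹' T = univ.pi fun k => Iio (u ^ c (j.succAbove k)) by ext; simp [T],
      Measure.pi_pi, rpow_sum_of_pos hu.1,
      ENNReal.ofReal_prod_of_nonneg fun k _ => rpow_nonneg hu.1.le _]
    exact Finset.prod_congr rfl fun k _ => volume_restrict_Ioo_zero_one_Iio (hpow k)
  have hsum : ∑ k, c k = (∑ k, c (j.succAbove k)) + 1 := by
    rw [Fin.sum_univ_succAbove c j, hcj, add_comm]
  rw [hpre, (measurePreserving_piFinSuccAbove (fun _ => μ) j).measure_preimage
    hT.nullMeasurableSet, Measure.prod_apply hT, setLIntegral_congr_fun measurableSet_Ioo hslice,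
    lintegral_Ioo_zero_one_rpow, hsum]
  linarith [Finset.sum_nonneg fun k (_ : k ∈ Finset.univ) => hc (j.succAbove k)]

lemma ae_pi_volume_restrict_Ioo {ι : Type*} [Fintype ι] :
    ∀ᵐ x ∂Measure.pi (fun _ : ι => volume.restrict (Ioo (0 : ℝ) 1)), ∀ i, x i ∈ Ioo 0 1 :=
  ae_all_iff.2 fun _ => Measure.tendsto_eval_ae_ae.eventually (ae_restrict_mem measurableSet_Ioo)

theorem gumbel_max_trick_general {Ω : Type*} [MeasurableSpace Ω] (P : Measure Ω)
    [IsProbabilityMeasure P] {n : ℕ} (U : Fin n → Ω → ℝ)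
    (hindep : ProbabilityTheory.iIndepFun U P)
    (hunif : ∀ i, P.map (U i) = volume.restrict (Set.Ioo (0 : ℝ) 1))
    (w : Fin n → ℝ) (hw : ∀ i, 0 < w i) (j : Fin n) :
    P {ω | ∀ m, m ≠ j →
        Real.log (w m) - Real.log (-Real.log (U m ω)) <
          Real.log (w j) - Real.log (-Real.log (U j ω))} =
      ENNReal.ofReal (w j / ∑ i, w i) := by
  obtain ⟨n, rfl⟩ : ∃ m, n = m + 1 := ⟨n - 1, (Nat.succ_pred_eq_of_pos j.pos).symm⟩
  -- `P.map (U i)` would be `0` if `U i` were not a.e.-measurable.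
  have hU : ∀ i, AEMeasurable (U i) P := fun i => .of_map_ne_zero (by simp [hunif])
  have hlaw : P.map (fun ω i => U i ω) = Measure.pi fun _ => volume.restrict (Ioo (0 : ℝ) 1) := by
    simp_rw [hindep.map_fun_eq_pi_map hU, hunif]
  set S := {x : Fin (n + 1) → ℝ | ∀ m, m ≠ j → log (w m) - log (-log (x m)) <
    log (w j) - log (-log (x j))}
  have hS : MeasurableSet S := by measurability
  have hevent : S =ᵐ[P.map (fun ω i => U i ω)] {x | ∀ k ≠ j, x k < x j ^ (w k / w j)} := by
    rw [hlaw]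
    filter_upwards [ae_pi_volume_restrict_Ioo] with x hx
    exact propext <| forall₂_congr fun k _ =>
      log_sub_log_neg_log_lt_iff (hw k) (hw j) (hx k) (hx j)
  refine (Measure.map_apply₀ (aemeasurable_pi_lambda _ hU) hS.nullMeasurableSet).symm.trans ?_
  rw [measure_congr hevent, hlaw,
    pi_volume_restrict_Ioo_setOf_lt_rpow _ (fun k => (div_pos (hw k) (hw j)).le) j
      (div_self (hw j).ne'), ← Finset.sum_div, one_div_div]

/-- Gumbel-max trick: if `U₁,…,Uₙ` are i.i.d. uniform on `(0,1)` and `Gᵢ = log wᵢ − log(−log Uᵢ)`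
with `wᵢ > 0`, then the probability that `Gⱼ` strictly exceeds all other `Gₘ` is `wⱼ / Z`. -/
theorem gumbel_max_trick {Ω : Type*} [MeasurableSpace Ω] (P : Measure Ω)
    [IsProbabilityMeasure P] {n : ℕ} (U : Fin n → Ω → ℝ) (hmeas : ∀ i, Measurable (U i))
    (hindep : ProbabilityTheory.iIndepFun U P)
    (hunif : ∀ i, P.map (U i) = volume.restrict (Set.Ioo (0 : ℝ) 1))
    (w : Fin n → ℝ) (hw : ∀ i, 0 < w i) (j : Fin n) :
    P {ω | ∀ m, m ≠ j →
        Real.log (w m) - Real.log (-Real.log (U m ω)) <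
          Real.log (w j) - Real.log (-Real.log (U j ω))} =
      ENNReal.ofReal (w j / ∑ i, w i) :=
  gumbel_max_trick_general P U hindep hunif w hw j
end

section
/- Weighted reservoir sampling, single draw: let U_1,…,U_n be independent random variables on a probability space, each uniformly distributed on the interval (0,1), let w_1,…,w_n > 0 with Z = Σ_{i=1}^n w_i, and define the reservoir keys R_i = U_i^{1/w_i}. Then for each index j, the probability that R_j is strictly larger than R_m for every m ≠ j equals w_j / Z. -/
/-!
The joint law of `(U₁, …, Uₙ)` is the product of uniform laws on `(0,1)`. Conditioning on
`Uⱼ = t`, the event `Rₘ < Rⱼ` for all `m ≠ j` says `Uₘ < t ^ (wₘ / wⱼ)` for all `m ≠ j`,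
which has probability `t ^ p` with `p = (Z - wⱼ) / wⱼ`; integrating over `t ∈ (0,1)` gives
`1 / (p + 1) = wⱼ / Z`.
-/

open MeasureTheory ProbabilityTheory Set

lemma uniform_measure_rpow_one_div_lt {c a : ℝ} (hc : 0 < c) (ha : 0 < a) (ha1 : a ≤ 1) :
    volume.restrict (Ioo (0 : ℝ) 1) {x | x ^ (1 / c) < a} = ENNReal.ofReal (a ^ c) := by
  have hac : a ^ c ≤ 1 := Real.rpow_le_one ha.le ha1 hc.le
  have hset : {x : ℝ | x ^ (1 / c) < a} ∩ Ioo 0 1 = Ioo 0 (a ^ c) := by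
    ext x
    simp only [mem_inter_iff, mem_ofPred_eq, mem_Ioo]
    constructor
    · rintro ⟨hxa, hx0, -⟩
      exact ⟨hx0, (Real.rpow_inv_lt_iff_of_pos hx0.le ha.le hc).1 (by rwa [← one_div])⟩
    · rintro ⟨hx0, hxa⟩
      refine ⟨?_, hx0, hxa.trans_le hac⟩
      rw [one_div]
      exact (Real.rpow_inv_lt_iff_of_pos hx0.le ha.le hc).2 hxa
  rw [Measure.restrict_apply' measurableSet_Ioo, hset, Real.volume_Ioo, sub_zero]

lemma pi_uniform_measure_forall_rpow_one_div_lt {ι : Type*} [Fintype ι] {c : ι → ℝ}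
    (hc : ∀ i, 0 < c i) {a : ℝ} (ha : 0 < a) (ha1 : a ≤ 1) :
    Measure.pi (fun _ : ι ↦ volume.restrict (Ioo (0 : ℝ) 1)) {x | ∀ i, x i ^ (1 / c i) < a} =
      ENNReal.ofReal (a ^ ∑ i, c i) := by
  have hset : {x : ι → ℝ | ∀ i, x i ^ (1 / c i) < a} =
      univ.pi fun i ↦ {y | y ^ (1 / c i) < a} := by
    ext x; simp
  rw [hset, Measure.pi_pi,
    Finset.prod_congr rfl fun i _ ↦ uniform_measure_rpow_one_div_lt (hc i) ha ha1,
    ← ENNReal.ofReal_prod_of_nonneg fun i _ ↦ (Real.rpow_pos_of_pos ha _).le,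
    Real.rpow_sum_of_pos ha]

lemma setLIntegral_Ioo_zero_one_rpow {p : ℝ} (hp : -1 < p) :
    ∫⁻ t in Ioo (0 : ℝ) 1, ENNReal.ofReal (t ^ p) = ENNReal.ofReal (p + 1)⁻¹ := by
  have hint : IntegrableOn (fun t : ℝ ↦ t ^ p) (Ioo 0 1) :=
    (intervalIntegral.intervalIntegrable_rpow' hp).1.mono_set Ioo_subset_Ioc_self
  have hnonneg : 0 ≤ᵐ[volume.restrict (Ioo (0 : ℝ) 1)] fun t ↦ t ^ p := by
    filter_upwards [self_mem_ae_restrict measurableSet_Ioo] with t ht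
    exact Real.rpow_nonneg ht.1.le _
  rw [← ofReal_integral_eq_lintegral_ofReal hint hnonneg, ← integral_Ioc_eq_integral_Ioo,
    ← intervalIntegral.integral_of_le zero_le_one, integral_rpow (Or.inl hp), Real.one_rpow,
    Real.zero_rpow (by linarith), sub_zero, one_div]

lemma pi_uniform_measure_rpow_one_div_argmax {n : ℕ} {w : Fin n → ℝ} (hw : ∀ i, 0 < w i)
    (j : Fin n) :
    Measure.pi (fun _ ↦ volume.restrict (Ioo (0 : ℝ) 1))
        {x | ∀ m, m ≠ j → x m ^ (1 / w m) < x j ^ (1 / w j)} =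
      ENNReal.ofReal (w j / ∑ i, w i) := by
  rcases n with _ | n
  · exact j.elim0
  set μ := volume.restrict (Ioo (0 : ℝ) 1)
  set T : Set (ℝ × (Fin n → ℝ)) :=
    {p | ∀ k, p.2 k ^ (1 / w (j.succAbove k)) < p.1 ^ (1 / w j)}
  have hT : MeasurableSet T := by
    simp only [T, ofPred_forall]
    exact .iInter fun k ↦ measurableSet_lt (by fun_prop) (by fun_prop)
  have hpre : {x : Fin (n + 1) → ℝ | ∀ m, m ≠ j → x m ^ (1 / w m) < x j ^ (1 / w j)} =
      MeasurableEquiv.piFinSuccAbove (fun _ ↦ ℝ) j ⁻¹' T := by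
    ext x
    refine ⟨fun hx k ↦ hx _ (j.succAbove_ne k), fun hx m hm ↦ ?_⟩
    obtain ⟨k, rfl⟩ := Fin.exists_succAbove_eq hm
    exact hx k
  set p := (∑ k, w (j.succAbove k)) / w j
  have hp : 0 ≤ p := div_nonneg (Finset.sum_nonneg fun k _ ↦ (hw _).le) (hw j).le
  have hslice : ∀ t ∈ Ioo (0 : ℝ) 1,
      Measure.pi (fun _ ↦ μ) (Prod.mk t ⁻¹' T) = ENNReal.ofReal (t ^ p) := by
    intro t ht
    change Measure.pi _ {y | ∀ k, y k ^ (1 / w (j.succAbove k)) < t ^ (1 / w j)} = _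
    rw [pi_uniform_measure_forall_rpow_one_div_lt (fun k ↦ hw _) (Real.rpow_pos_of_pos ht.1 _)
        (Real.rpow_le_one ht.1.le ht.2.le (one_div_pos.2 (hw j)).le),
      ← Real.rpow_mul ht.1.le, one_div_mul_eq_div]
  have hZ : ∑ i, w i = w j * (p + 1) := by
    rw [Fin.sum_univ_succAbove w j, mul_add, mul_one, mul_div_cancel₀ _ (hw j).ne', add_comm]
  rw [hpre, (measurePreserving_piFinSuccAbove (fun _ ↦ μ) j).measure_preimage
      hT.nullMeasurableSet, Measure.prod_apply hT, setLIntegral_congr_fun measurableSet_Ioo hslice,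
    setLIntegral_Ioo_zero_one_rpow (by linarith), hZ, div_mul_cancel_left₀ (hw j).ne']

theorem reservoir_single_draw_general {Ω : Type*} [MeasurableSpace Ω] (P : Measure Ω)
    [IsProbabilityMeasure P] {n : ℕ} (U : Fin n → Ω → ℝ)
    (hindep : ProbabilityTheory.iIndepFun U P)
    (hunif : ∀ i, P.map (U i) = volume.restrict (Set.Ioo (0 : ℝ) 1))
    (w : Fin n → ℝ) (hw : ∀ i, 0 < w i) (j : Fin n) :
    P {ω | ∀ m, m ≠ j → U m ω ^ (1 / w m) < U j ω ^ (1 / w j)} =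
      ENNReal.ofReal (w j / ∑ i, w i) := by
  have hU : ∀ i, AEMeasurable (U i) P := fun i ↦
    .of_map_ne_zero (by simp [hunif i])
  have hlaw : P.map (fun ω i ↦ U i ω) =
      Measure.pi fun _ ↦ volume.restrict (Ioo (0 : ℝ) 1) := by
    rw [hindep.map_fun_eq_pi_map hU]
    simp only [hunif]
  have hS : MeasurableSet
      {x : Fin n → ℝ | ∀ m, m ≠ j → x m ^ (1 / w m) < x j ^ (1 / w j)} := by
    simp only [ofPred_forall]
    exact .iInter fun m ↦ .iInter fun _ ↦ measurableSet_lt (by fun_prop) (by fun_prop)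
  rw [← pi_uniform_measure_rpow_one_div_argmax hw j, ← hlaw,
    Measure.map_apply_of_aemeasurable (aemeasurable_pi_lambda _ hU) hS]
  rfl

/-- Weighted reservoir sampling, single draw: if `U₁,…,Uₙ` are i.i.d. uniform on `(0,1)` and
`Rᵢ = Uᵢ^{1/wᵢ}` with `wᵢ > 0`, then the probability that `Rⱼ` strictly exceeds all other
`Rₘ` is `wⱼ / Z`. -/
theorem reservoir_single_draw {Ω : Type*} [MeasurableSpace Ω] (P : Measure Ω)
    [IsProbabilityMeasure P] {n : ℕ} (U : Fin n → Ω → ℝ) (hmeas : ∀ i, Measurable (U i))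
    (hindep : ProbabilityTheory.iIndepFun U P)
    (hunif : ∀ i, P.map (U i) = volume.restrict (Set.Ioo (0 : ℝ) 1))
    (w : Fin n → ℝ) (hw : ∀ i, 0 < w i) (j : Fin n) :
    P {ω | ∀ m, m ≠ j → U m ω ^ (1 / w m) < U j ω ^ (1 / w j)} =
      ENNReal.ofReal (w j / ∑ i, w i) :=
  reservoir_single_draw_general P U hindep hunif w hw j
end

section
/- Ordered top-k distribution of weighted reservoir sampling keys (Efraimidis–Spirakis): let U_1,…,U_n be independent random variables on a probability space, each uniformly distributed on the interval (0,1), let w_1,…,w_n > 0 with Z = Σ_{i=1}^n w_i, and define the reservoir keys R_i = U_i^{1/w_i}. Then for any k ≤ n and any sequence of distinct indices i_1,…,i_k, the probability of the event {R_{i_1} > R_{i_2} > ⋯ > R_{i_k}, and R_{i_k} > R_m for every m ∉ {i_1,…,i_k}} equals Π_{j=1}^k w_{i_j} / (Z − Σ_{l<j} w_{i_l}). In other words, the indices achieving the k largest keys, listed in decreasing key order, are distributed as sampling k items without replacement with probabilities proportional to the weights. -/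
/-!
A key `U ^ (1 / c)` has distribution function `t ^ c` on `(0, 1)`. One proves by induction on `k`
the stronger statement that the ranking event intersected with "all keys are below `t`" has
probability `t ^ Z * p(S_wrs | w)` for `t ∈ (0, 1]`. For the inductive step, condition on the
largest key `s = R_{i_1}`: the remaining `n - 1` keys must realise the ranking `i_2, …, i_k` and
all lie below `s`, which by induction has probability `s ^ (Z - w) * p(…)` with `w = w_{i_1}`,
and `∫_0^t s ^ (Z - w) d(s ^ w) = (w / Z) * t ^ Z`. Taking `t = 1` gives the theorem.
-/

open MeasureTheory Set Function

noncomputable def keyMeasure (c : ℝ) : Measure ℝ :=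
  (volume.restrict (Ioo 0 1)).map fun u => u ^ (1 / c)

lemma measurable_rpow_one_div (c : ℝ) : Measurable fun u : ℝ => u ^ (1 / c) := by fun_prop

instance (c : ℝ) : IsProbabilityMeasure (keyMeasure c) :=
  ⟨by rw [keyMeasure, Measure.map_apply (measurable_rpow_one_div c) MeasurableSet.univ]; simp⟩

lemma ae_keyMeasure_mem_Ioo {c : ℝ} (hc : 0 < c) : ∀ᵐ t ∂keyMeasure c, t ∈ Ioo 0 1 := by
  refine (ae_map_iff (p := (· ∈ Ioo 0 1)) (measurable_rpow_one_div c).aemeasurable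
    measurableSet_Ioo).2 ?_
  filter_upwards [ae_restrict_mem measurableSet_Ioo] with u hu
  exact ⟨Real.rpow_pos_of_pos hu.1 _, Real.rpow_lt_one hu.1.le hu.2 (by positivity)⟩

lemma preimage_rpow_one_div_Iio_inter_Ioo {c t : ℝ} (hc : 0 < c) (ht : t ∈ Ioc 0 1) :
    (fun u : ℝ => u ^ (1 / c)) ⁻¹' Iio t ∩ Ioo 0 1 = Ioo 0 (t ^ c) := by
  have htc : t ^ c ≤ 1 := Real.rpow_le_one ht.1.le ht.2 hc.le
  ext u
  simp only [mem_inter_iff, mem_preimage, mem_Iio, mem_Ioo, one_div]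
  constructor
  · rintro ⟨h, h0, -⟩
    exact ⟨h0, (Real.rpow_inv_lt_iff_of_pos h0.le ht.1.le hc).1 h⟩
  · rintro ⟨h0, h⟩
    exact ⟨(Real.rpow_inv_lt_iff_of_pos h0.le ht.1.le hc).2 h, h0, h.trans_le htc⟩

lemma setLIntegral_Iio_rpow_keyMeasure {c W t : ℝ} (hc : 0 < c) (hW : 0 ≤ W)
    (ht : t ∈ Ioc 0 1) :
    ∫⁻ s in Iio t, ENNReal.ofReal (s ^ W) ∂keyMeasure c =
      ENNReal.ofReal (c / (c + W) * t ^ (c + W)) := by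
  have hexp : -1 < W / c := by linarith [div_nonneg hW hc.le]
  rw [keyMeasure, setLIntegral_map measurableSet_Iio (by fun_prop) (measurable_rpow_one_div c),
    Measure.restrict_restrict (measurableSet_Iio.preimage (measurable_rpow_one_div c)),
    preimage_rpow_one_div_Iio_inter_Ioo hc ht]
  -- after substituting `s = u ^ (1 / c)` this is `∫ u in 0..t ^ c, u ^ (W / c)`
  have hpow : ∀ u ∈ Ioo 0 (t ^ c),
      ENNReal.ofReal ((u ^ (1 / c)) ^ W) = ENNReal.ofReal (u ^ (W / c)) := fun u hu => by
    rw [← Real.rpow_mul hu.1.le, one_div_mul_eq_div]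
  rw [setLIntegral_congr_fun measurableSet_Ioo hpow, ← ofReal_integral_eq_lintegral_ofReal
    ((intervalIntegral.intervalIntegrable_rpow' hexp).1.mono_set Ioo_subset_Ioc_self)
    ((ae_restrict_mem measurableSet_Ioo).mono fun u hu => Real.rpow_nonneg hu.1.le _),
    ← integral_Ioc_eq_integral_Ioo,
    ← intervalIntegral.integral_of_le (Real.rpow_nonneg ht.1.le c), integral_rpow (Or.inl hexp),
    Real.zero_rpow (by linarith), ← Real.rpow_mul ht.1.le]
  congr 1
  field_simp
  ring_nf

lemma keyMeasure_Iio {c t : ℝ} (hc : 0 < c) (ht : t ∈ Ioc 0 1) :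
    keyMeasure c (Iio t) = ENNReal.ofReal (t ^ c) := by
  simpa [hc.ne'] using setLIntegral_Iio_rpow_keyMeasure hc le_rfl ht

theorem Fin.sum_Iio_succ {M : Type*} [AddCommMonoid M] {k : ℕ} (f : Fin (k + 1) → M)
    (j : Fin k) :
    ∑ l ∈ Finset.Iio j.succ, f l = f 0 + ∑ l ∈ Finset.Iio j, f l.succ := by
  rw [← Finset.Ico_bot, bot_eq_zero, ← Finset.Ioo_insert_left (Fin.succ_pos j),
    Finset.sum_insert (by simp), ← Fin.map_succEmb_Iio, Finset.sum_map]
  rfl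

theorem Fin.exists_injective_eq_cons_succAbove {N k : ℕ} {i : Fin (k + 1) → Fin (N + 1)}
    (hi : Injective i) :
    ∃ a i', Injective i' ∧ i = Fin.cons a (a.succAbove ∘ i') := by
  choose i' hi' using fun j => Fin.exists_succAbove_eq fun h => Fin.succ_ne_zero j (hi h)
  refine ⟨i 0, i', fun p q hpq => Fin.succ_injective _ (hi ?_), funext fun j => ?_⟩
  · rw [← hi' p, ← hi' q, hpq]
  · cases j using Fin.cases with
    | zero => rfl
    | succ j => exact (hi' j).symm

-- `p(S_wrs | w)`: the probability of drawing `i 0, …, i (k - 1)` in this order.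
noncomputable def orderedSampleProb {ι : Type*} [Fintype ι] {k : ℕ} (w : ι → ℝ)
    (i : Fin k → ι) : ℝ :=
  ∏ j, w (i j) / ((∑ m, w m) - ∑ l ∈ Finset.Iio j, w (i l))

lemma orderedSampleProb_cons {N k : ℕ} (w : Fin (N + 1) → ℝ) (a : Fin (N + 1))
    (i : Fin k → Fin N) :
    orderedSampleProb w (Fin.cons a (a.succAbove ∘ i)) =
      w a / (w a + ∑ m, w (a.succAbove m)) * orderedSampleProb (w ∘ a.succAbove) i := by
  simp only [orderedSampleProb, Fin.prod_univ_succ, Fin.cons_zero, Fin.cons_succ, Fin.sum_Iio_succ,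
    Fin.sum_univ_succAbove w a, add_sub_add_left_eq_sub, comp_apply]
  rw [show Finset.Iio (0 : Fin (k + 1)) = ∅ from Finset.Iio_eq_empty.2 isMin_bot,
    Finset.sum_empty, sub_zero]

def topRanking {ι : Type*} {k : ℕ} (i : Fin k → ι) : Set (ι → ℝ) :=
  {x | StrictAnti (x ∘ i) ∧ ∀ j, ∀ m ∉ range i, x m < x (i j)}

lemma measurableSet_topRanking {ι : Type*} [Countable ι] {k : ℕ} (i : Fin k → ι) :
    MeasurableSet (topRanking i) := by
  simp only [topRanking, StrictAnti, ofPred_and, ofPred_forall]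
  measurability

lemma mem_topRanking_iff {ι : Type*} {k : ℕ} (hk : 0 < k) (i : Fin k → ι) (x : ι → ℝ) :
    x ∈ topRanking i ↔
      StrictAnti (x ∘ i) ∧
        ∀ m ∉ range i, x m < x (i ⟨k - 1, Nat.sub_one_lt hk.ne'⟩) := by
  refine ⟨fun h => ⟨h.1, fun m hm => h.2 _ m hm⟩,
    fun ⟨hanti, hlast⟩ => ⟨hanti, fun j m hm => ?_⟩⟩
  have hj : j ≤ ⟨k - 1, Nat.sub_one_lt hk.ne'⟩ := by change (j : ℕ) ≤ k - 1; omega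
  exact (hlast m hm).trans_le (hanti.antitone hj)

lemma succAbove_mem_range_cons_iff {N k : ℕ} (a : Fin (N + 1)) (i : Fin k → Fin N)
    (m : Fin N) :
    a.succAbove m ∈ range (Fin.cons a (a.succAbove ∘ i) : Fin (k + 1) → Fin (N + 1)) ↔
      m ∈ range i := by
  simp [Fin.range_cons, range_comp, Fin.succAbove_ne, Fin.succAbove_right_injective.mem_set_image]

lemma mem_topRanking_cons_inter_pi_Iio {N k : ℕ} (a : Fin (N + 1)) (i : Fin k → Fin N)
    (t : ℝ) (x : Fin (N + 1) → ℝ) :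
    x ∈ topRanking (Fin.cons a (a.succAbove ∘ i) : Fin (k + 1) → Fin (N + 1)) ∩
        univ.pi (fun _ => Iio t) ↔
      x a < t ∧ x ∘ a.succAbove ∈ topRanking i ∩ univ.pi (fun _ => Iio (x a)) := by
  simp only [topRanking, mem_inter_iff, mem_ofPred_eq, mem_univ_pi, mem_Iio, comp_apply]
  constructor
  · rintro ⟨⟨hanti, hout⟩, hbox⟩
    refine ⟨hbox a, ⟨hanti.comp_strictMono Fin.strictMono_succ, fun j m hm => ?_⟩,
      fun m => ?_⟩
    · exact hout j.succ _ ((succAbove_mem_range_cons_iff a i m).not.2 hm)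
    · by_cases hm : m ∈ range i
      · obtain ⟨p, rfl⟩ := hm
        exact hanti (Fin.succ_pos p)
      · exact hout 0 _ ((succAbove_mem_range_cons_iff a i m).not.2 hm)
  · rintro ⟨ha, ⟨hanti, hout⟩, hbox⟩
    refine ⟨⟨fun p q hpq => ?_, fun j m hm => ?_⟩, (Fin.forall_iff_succAbove a).2
      ⟨ha, fun m => (hbox m).trans ha⟩⟩
    · cases q using Fin.cases with
      | zero => exact absurd hpq (Fin.not_lt_zero p)
      | succ q =>
        cases p using Fin.cases with
        | zero => exact hbox (i q)
        | succ p => exact hanti (Fin.succ_lt_succ_iff.1 hpq)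
    · obtain ⟨m, rfl⟩ := Fin.exists_succAbove_eq (y := a) (fun h => hm ⟨0, h.symm⟩)
      have hm' : m ∉ range i := (succAbove_mem_range_cons_iff a i m).not.1 hm
      cases j using Fin.cases with
      | zero => exact hbox m
      | succ j => exact hout j m hm'

theorem pi_keyMeasure_topRanking_inter_pi_Iio {n k : ℕ} {w : Fin n → ℝ} (hw : ∀ m, 0 < w m)
    {i : Fin k → Fin n} (hi : Injective i) {t : ℝ} (ht : t ∈ Ioc 0 1) :
    Measure.pi (fun m => keyMeasure (w m)) (topRanking i ∩ univ.pi fun _ => Iio t) =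
      ENNReal.ofReal (t ^ ∑ m, w m) * ENNReal.ofReal (orderedSampleProb w i) := by
  induction k generalizing n t with
  | zero =>
    have hEv : topRanking i = univ :=
      eq_univ_of_forall fun x => ⟨fun a => a.elim0, fun j => j.elim0⟩
    rw [hEv, univ_inter, Measure.pi_pi, orderedSampleProb, Fin.prod_univ_zero,
      ENNReal.ofReal_one, mul_one, Real.rpow_sum_of_pos ht.1,
      ENNReal.ofReal_prod_of_nonneg fun m _ => Real.rpow_nonneg ht.1.le _]
    exact Finset.prod_congr rfl fun m _ => keyMeasure_Iio (hw m) ht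
  | succ k ih =>
    rcases n with _ | N
    · exact (i 0).elim0
    obtain ⟨a, i', hi', rfl⟩ := Fin.exists_injective_eq_cons_succAbove hi
    set T := {p : ℝ × (Fin N → ℝ) | p.2 ∈ topRanking i' ∩ univ.pi fun _ => Iio p.1}
    have hT : MeasurableSet T := by
      simp only [T, mem_inter_iff, mem_univ_pi, mem_Iio, ofPred_and, ofPred_forall]
      exact ((measurableSet_topRanking i').preimage measurable_snd).inter
        (MeasurableSet.iInter fun m => measurableSet_lt (by fun_prop) measurable_fst)
    have hpre : topRanking (Fin.cons a (a.succAbove ∘ i')) ∩ univ.pi (fun _ => Iio t) =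
        MeasurableEquiv.piFinSuccAbove (fun _ => ℝ) a ⁻¹' (T ∩ Iio t ×ˢ univ) := by
      ext x
      exact (mem_topRanking_cons_inter_pi_Iio a i' t x).trans
        (and_comm.trans (and_congr_right' (and_true _).symm.to_iff))
    have hsection : ∀ᵐ s ∂(keyMeasure (w a)).restrict (Iio t),
        Measure.pi (fun m => keyMeasure (w (a.succAbove m))) (Prod.mk s ⁻¹' T) =
          ENNReal.ofReal (s ^ ∑ m, w (a.succAbove m)) *
            ENNReal.ofReal (orderedSampleProb (w ∘ a.succAbove) i') := by
      filter_upwards [ae_restrict_of_ae (ae_keyMeasure_mem_Ioo (hw a))] with s hs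
      exact ih (fun m => hw _) hi' ⟨hs.1, hs.2.le⟩
    have hW : 0 ≤ ∑ m, w (a.succAbove m) := Finset.sum_nonneg fun m _ => (hw _).le
    rw [hpre,
      (measurePreserving_piFinSuccAbove (fun m => keyMeasure (w m)) a).measure_preimage_equiv,
      ← Measure.restrict_apply' (measurableSet_Iio.prod MeasurableSet.univ),
      ← Measure.prod_restrict, Measure.restrict_univ, Measure.prod_apply hT,
      lintegral_congr_ae hsection, lintegral_mul_const _ (by fun_prop),
      setLIntegral_Iio_rpow_keyMeasure (hw a) hW ht, orderedSampleProb_cons,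
      Fin.sum_univ_succAbove w a, ← ENNReal.ofReal_mul, ← ENNReal.ofReal_mul]
    · congr 1
      ring
    · exact Real.rpow_nonneg ht.1.le _
    · exact mul_nonneg (div_nonneg (hw a).le (add_nonneg (hw a).le hW))
        (Real.rpow_nonneg ht.1.le _)

theorem pi_keyMeasure_topRanking {n k : ℕ} {w : Fin n → ℝ} (hw : ∀ m, 0 < w m)
    {i : Fin k → Fin n} (hi : Injective i) :
    Measure.pi (fun m => keyMeasure (w m)) (topRanking i) =
      ENNReal.ofReal (orderedSampleProb w i) := by
  have hbox : univ.pi (fun _ => Iio (1 : ℝ)) ∈ ae (Measure.pi fun m => keyMeasure (w m)) := by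
    simp only [← Filter.eventually_mem_set, mem_univ_pi, mem_Iio, ae_all_iff]
    intro m
    exact (Measure.tendsto_eval_ae_ae (μ := fun m => keyMeasure (w m)) (i := m)).eventually
      ((ae_keyMeasure_mem_Ioo (hw m)).mono fun _ h => h.2)
  rw [← measure_inter_conull (mem_ae_iff.1 hbox),
    pi_keyMeasure_topRanking_inter_pi_Iio hw hi ⟨one_pos, le_rfl⟩, Real.one_rpow,
    ENNReal.ofReal_one, one_mul]

/-- Efraimidis–Spirakis: for i.i.d. `U₁,…,Uₙ` uniform on `(0,1)`, weights `wᵢ > 0` with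
`Z = Σ wᵢ`, and reservoir keys `Rᵢ = Uᵢ^{1/wᵢ}`, the probability that the distinct indices
`i 0, …, i (k-1)` achieve the `k` largest keys in decreasing order (so `R_{i_1} > ⋯ > R_{i_k}`
and `R_{i_k} > R_m` for every `m` outside the sample) equals
`Π_j w_{i_j} / (Z − Σ_{l<j} w_{i_l})`. -/
theorem reservoir_topk_distribution {Ω : Type*} [MeasurableSpace Ω] (P : Measure Ω)
    {n : ℕ} (U : Fin n → Ω → ℝ) (hmeas : ∀ m, Measurable (U m))
    (hindep : ProbabilityTheory.iIndepFun U P)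
    (hunif : ∀ m, P.map (U m) = volume.restrict (Set.Ioo (0 : ℝ) 1))
    (w : Fin n → ℝ) (hw : ∀ m, 0 < w m) (k : ℕ) (hk : 0 < k)
    (i : Fin k → Fin n) (hi : Function.Injective i) :
    P {ω | (∀ a b : Fin k, a < b → U (i b) ω ^ (1 / w (i b)) < U (i a) ω ^ (1 / w (i a))) ∧
        ∀ m : Fin n, m ∉ Set.range i →
          U m ω ^ (1 / w m) < U (i ⟨k - 1, by omega⟩) ω ^ (1 / w (i ⟨k - 1, by omega⟩))} =
      ENNReal.ofReal
        (∏ j : Fin k, w (i j) / ((∑ m, w m) - ∑ l ∈ Finset.Iio j, w (i l))) := by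
  set R : Ω → Fin n → ℝ := fun ω m => U m ω ^ (1 / w m)
  have hR : ∀ m, Measurable fun ω => R ω m :=
    fun m => (measurable_rpow_one_div _).comp (hmeas m)
  have hlaw : P.map R = Measure.pi fun m => keyMeasure (w m) := by
    rw [(hindep.comp _ fun m => measurable_rpow_one_div (w m)).map_fun_eq_pi_map
      fun m => (hR m).aemeasurable]
    congr with m : 1
    rw [keyMeasure, ← hunif m, Measure.map_map (measurable_rpow_one_div _) (hmeas m)]
    rfl
  have hprob : P (R ⁻¹' topRanking i) = ENNReal.ofReal (orderedSampleProb w i) := by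
    rw [← Measure.map_apply (measurable_pi_lambda _ hR) (measurableSet_topRanking i), hlaw,
      pi_keyMeasure_topRanking hw hi]
  convert hprob using 2
  · ext ω
    exact (mem_topRanking_iff hk i (R ω)).symm
  · rfl
end
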